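/- arXiv:2410.04101 — 5 statements merged into one kernel-verified Lean document; each statement's English description precedes it below -/
import Mathlib

section
/- Given positive integers α, β, u with β ≥ α+3u−2, the set of u arrays B_j for j ∈ [0, u−1], where B_j is the 2×3 array with rows (α+2j, −(α+β+j), β−j) and (−(α+2j), α+β+j, −(β−j)), consists of zero-sum blocks, and the multiset of absolute values of all entries across all B_j is exactly the disjoint union [α, α+2u−2]₂ ⊔ [β−u+1, β] ⊔ [α+β, α+β+u−1], where [a,b]_d denotes {a, a+d, a+2d, ..., b}. -/
/-- The integer arithmetic progression {a, a+d, …, a+(len−1)d}. -/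
def AP (a d : ℤ) (len : ℕ) : Set ℤ := {x | ∃ i : ℕ, i < len ∧ x = a + i * d}

/-- ±Ω = {ω, −ω : ω ∈ Ω}. -/
def pmSet (S : Set ℤ) : Set ℤ := {x | x ∈ S ∨ -x ∈ S}

/-- Lemma BlockB.  The u arrays B_j are zero-sum blocks, each entry appears
exactly once, and the absolute values of the entries are exactly the disjoint union
[α, α+2u−2]₂ ⊔ [β−u+1, β] ⊔ [α+β, α+β+u−1]. -/
theorem stmt_7 (α β : ℤ) (u : ℕ) (hα : 1 ≤ α) (hβ : 1 ≤ β) (hu : 1 ≤ u)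
    (h : α + 3 * u - 2 ≤ β) :
    let B : Fin u → Matrix (Fin 2) (Fin 3) ℤ := fun j =>
      !![α + 2*(j:ℕ), -(α + β + (j:ℕ)), β - (j:ℕ);
         -(α + 2*(j:ℕ)), α + β + (j:ℕ), -(β - (j:ℕ))]
    (∀ j, (∀ r, ∑ c, B j r c = 0) ∧ (∀ c, ∑ r, B j r c = 0)) ∧
    Function.Injective (fun p : Fin u × Fin 2 × Fin 3 => B p.1 p.2.1 p.2.2) ∧
    {x : ℤ | ∃ p : Fin u × Fin 2 × Fin 3, B p.1 p.2.1 p.2.2 = x} =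
      pmSet (AP α 2 u ∪ AP (β - u + 1) 1 u ∪ AP (α + β) 1 u) ∧
    Disjoint (AP α 2 u) (AP (β - u + 1) 1 u) ∧
    Disjoint (AP α 2 u) (AP (α + β) 1 u) ∧
    Disjoint (AP (β - u + 1) 1 u) (AP (α + β) 1 u) := by
  intro B
  have hr2 : ∀ r : Fin 2, r = 0 ∨ r = 1 := by decide
  have hc3 : ∀ c : Fin 3, c = 0 ∨ c = 1 ∨ c = 2 := by decide
  refine ⟨?_, ?_, ?_, ?_, ?_, ?_⟩
  · intro j
    constructor
    · intro r
      rcases hr2 r with rfl | rfl <;> simp [B, Fin.sum_univ_three] <;> ring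
    · intro c
      rcases hc3 c with rfl | rfl | rfl <;> simp [B, Fin.sum_univ_two] <;> ring
  · rintro ⟨j1, r1, c1⟩ ⟨j2, r2, c2⟩ hEq
    have hj1 := j1.isLt; have hj2 := j2.isLt
    simp only at hEq
    rcases hr2 r1 with rfl | rfl <;> rcases hc3 c1 with rfl | rfl | rfl <;>
      rcases hr2 r2 with rfl | rfl <;> rcases hc3 c2 with rfl | rfl | rfl <;>
      simp only [B, Matrix.cons_val', Matrix.cons_val_zero, Matrix.cons_val_one,
        Matrix.head_cons, Matrix.head_fin_const, Matrix.empty_val',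
        Matrix.cons_val_fin_one, Matrix.cons_val_two, Matrix.tail_cons,
        Matrix.of_apply] at hEq <;>
      first
        | (exfalso; omega)
        | (obtain rfl : j1 = j2 := Fin.ext (by omega); rfl)
  · ext x
    simp only [Set.mem_setOf_eq, pmSet, AP, Set.mem_union]
    constructor
    · rintro ⟨⟨j, r, c⟩, rfl⟩
      have hj := j.isLt
      rcases hr2 r with rfl | rfl <;> rcases hc3 c with rfl | rfl | rfl <;>
        simp only [B, Matrix.cons_val', Matrix.cons_val_zero, Matrix.cons_val_one,
          Matrix.head_cons, Matrix.head_fin_const, Matrix.empty_val',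
          Matrix.cons_val_fin_one, Matrix.cons_val_two, Matrix.tail_cons,
          Matrix.of_apply]
      · exact Or.inl (Or.inl (Or.inl ⟨j, hj, by ring⟩))
      · exact Or.inr (Or.inr ⟨j, hj, by ring⟩)
      · exact Or.inl (Or.inl (Or.inr ⟨u - 1 - j, by omega, by omega⟩))
      · exact Or.inr (Or.inl (Or.inl ⟨j, hj, by ring⟩))
      · exact Or.inl (Or.inr ⟨j, hj, by ring⟩)
      · exact Or.inr (Or.inl (Or.inr ⟨u - 1 - j, by omega, by omega⟩))
    · rintro (((⟨i, hi, rfl⟩ | ⟨i, hi, rfl⟩) | ⟨i, hi, rfl⟩) |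
        ((⟨i, hi, hx⟩ | ⟨i, hi, hx⟩) | ⟨i, hi, hx⟩))
      · exact ⟨(⟨i, hi⟩, 0, 0), by simp [B]; try ring⟩
      · exact ⟨(⟨u - 1 - i, by omega⟩, 0, 2), by simp [B]; try omega⟩
      · exact ⟨(⟨i, hi⟩, 1, 1), by simp [B]; try ring⟩
      · exact ⟨(⟨i, hi⟩, 1, 0), by simp [B]; try omega⟩
      · exact ⟨(⟨u - 1 - i, by omega⟩, 1, 2), by simp [B]; try omega⟩
      · exact ⟨(⟨i, hi⟩, 0, 1), by simp [B]; try omega⟩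
  all_goals
    rw [Set.disjoint_left]
    rintro x ⟨i, hi, rfl⟩ ⟨i', hi', hx⟩
    omega
end

section
/- For nonnegative integers α, β, u with u ≤ α+1, there exists a set 𝔄(α,β,u) of 2u square zero-sum 3×3 integer arrays whose combined entries are exactly the elements of ±[2α+2, 2α+8u]₂ ⊔ ±[4α+6u+4, 4α+10u]₄ ⊔ ±[2β+1, 2β+4u−1]₂ ⊔ ±[2α+2β+2u+3, 2α+2β+10u−1]₄, each appearing exactly once in exactly one array. -/
/-- positive values of the block entries -/
def pval (α β u j : ℕ) (r c : Fin 3) : ℤ :=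
  match r.val, c.val with
  | 0, 0 => 2*(α:ℤ)+2*β+2*u+3+4*j
  | 0, 1 => 2*(β:ℤ)+2*u+1+2*j
  | 0, 2 => 2*(α:ℤ)+2+2*j
  | 1, 0 => 2*(β:ℤ)+1+2*j
  | 1, 1 => 2*(α:ℤ)+2*β+6*u+3+4*j
  | 1, 2 => 2*(α:ℤ)+6*u+2+2*j
  | 2, 0 => 2*(α:ℤ)+2*u+2+2*j
  | 2, 1 => 2*(α:ℤ)+4*u+2+2*j
  | _, _ => 4*(α:ℤ)+6*u+4+4*j

/-- sign pattern -/
def sg (r c : Fin 3) : ℤ :=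
  match r.val, c.val with
  | 0, 0 => 1
  | 1, 1 => 1
  | 2, 2 => 1
  | _, _ => -1

lemma pval_pos (α β u j : ℕ) (r c : Fin 3) : 0 < pval α β u j r c := by
  fin_cases r <;> fin_cases c <;> simp [pval] <;> positivity

lemma sg_pm (r c : Fin 3) : sg r c = 1 ∨ sg r c = -1 := by
  fin_cases r <;> fin_cases c <;> simp [sg]

lemma pval_inj (α β u : ℕ) (hu : u ≤ α + 1) (j1 j2 : ℕ) (h1 : j1 < u) (h2 : j2 < u)
    (r1 c1 r2 c2 : Fin 3)
    (h : pval α β u j1 r1 c1 = pval α β u j2 r2 c2) :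
    j1 = j2 ∧ r1 = r2 ∧ c1 = c2 := by
  fin_cases r1 <;> fin_cases c1 <;> fin_cases r2 <;> fin_cases c2 <;>
    simp_all [pval] <;> omega

lemma pval_mem (α β u : ℕ) (j : ℕ) (hj : j < u) (r c : Fin 3) :
    pval α β u j r c ∈
      AP (2*(α:ℤ)+2) 2 (4*u) ∪ AP (4*(α:ℤ)+6*u+4) 4 u ∪
      AP (2*(β:ℤ)+1) 2 (2*u) ∪ AP (2*(α:ℤ)+2*(β:ℤ)+2*u+3) 4 (2*u) := by
  fin_cases r <;> fin_cases c <;> simp only [pval, AP, Set.mem_union, Set.mem_setOf_eq,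
    Matrix.cons_val', Matrix.cons_val_zero, Matrix.cons_val_one, Matrix.head_cons,
    Matrix.empty_val', Matrix.cons_val_fin_one, Matrix.head_fin_const]
  · -- (0,0) : AP4 index j
    exact Or.inr ⟨j, by omega, by push_cast; ring⟩
  · -- (0,1) : AP3 index u+j
    exact Or.inl (Or.inr ⟨u+j, by omega, by push_cast; ring⟩)
  · -- (0,2) : AP1 index j
    exact Or.inl (Or.inl (Or.inl ⟨j, by omega, by push_cast; ring⟩))
  · -- (1,0) : AP3 index j
    exact Or.inl (Or.inr ⟨j, by omega, by push_cast; ring⟩)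
  · -- (1,1) : AP4 index u+j
    exact Or.inr ⟨u+j, by omega, by push_cast; ring⟩
  · -- (1,2) : AP1 index 3u+j
    exact Or.inl (Or.inl (Or.inl ⟨3*u+j, by omega, by push_cast; ring⟩))
  · -- (2,0) : AP1 index u+j
    exact Or.inl (Or.inl (Or.inl ⟨u+j, by omega, by push_cast; ring⟩))
  · -- (2,1) : AP1 index 2u+j
    exact Or.inl (Or.inl (Or.inl ⟨2*u+j, by omega, by push_cast; ring⟩))
  · -- (2,2) : AP2 index j
    exact Or.inl (Or.inl (Or.inr ⟨j, by omega, by push_cast; ring⟩))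

lemma pval_decode (α β u : ℕ) (y : ℤ)
    (hy : y ∈ AP (2*(α:ℤ)+2) 2 (4*u) ∪ AP (4*(α:ℤ)+6*u+4) 4 u ∪
      AP (2*(β:ℤ)+1) 2 (2*u) ∪ AP (2*(α:ℤ)+2*(β:ℤ)+2*u+3) 4 (2*u)) :
    ∃ j : ℕ, j < u ∧ ∃ r c : Fin 3, y = pval α β u j r c := by
  have split : ∀ m i : ℕ, i < m * u → ∃ q j : ℕ, j < u ∧ q < m ∧ i = q * u + j := by
    intro m i hi
    have hu0 : 0 < u := by
      rcases Nat.eq_zero_or_pos u with h | h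
      · subst h; simp at hi
      · exact h
    refine ⟨i / u, i % u, Nat.mod_lt _ hu0, ?_, ?_⟩
    · rw [Nat.div_lt_iff_lt_mul hu0]; omega
    · exact (Nat.div_add_mod' i u).symm
  rcases hy with ((h1 | h2) | h3) | h4
  · obtain ⟨i, hi, rfl⟩ := h1
    obtain ⟨q, j, hj, hq, rfl⟩ := split 4 i (by omega)
    refine ⟨j, hj, ?_⟩
    have : q = 0 ∨ q = 1 ∨ q = 2 ∨ q = 3 := by omega
    rcases this with rfl | rfl | rfl | rfl
    · exact ⟨0, 2, by simp [pval]; push_cast; ring⟩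
    · exact ⟨2, 0, by simp [pval]; push_cast; ring⟩
    · exact ⟨2, 1, by simp [pval]; push_cast; ring⟩
    · exact ⟨1, 2, by simp [pval]; push_cast; ring⟩
  · obtain ⟨i, hi, rfl⟩ := h2
    exact ⟨i, hi, 2, 2, by simp [pval]; push_cast; ring⟩
  · obtain ⟨i, hi, rfl⟩ := h3
    obtain ⟨q, j, hj, hq, rfl⟩ := split 2 i (by omega)
    refine ⟨j, hj, ?_⟩
    have : q = 0 ∨ q = 1 := by omega
    rcases this with rfl | rfl
    · exact ⟨1, 0, by simp [pval]; push_cast; ring⟩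
    · exact ⟨0, 1, by simp [pval]; push_cast; ring⟩
  · obtain ⟨i, hi, rfl⟩ := h4
    obtain ⟨q, j, hj, hq, rfl⟩ := split 2 i (by omega)
    refine ⟨j, hj, ?_⟩
    have : q = 0 ∨ q = 1 := by omega
    rcases this with rfl | rfl
    · exact ⟨0, 0, by simp [pval]; push_cast; ring⟩
    · exact ⟨1, 1, by simp [pval]; push_cast; ring⟩

/-- Lemma BlockA.  There is a set of 2u square zero-sum 3×3 arrays whose
entries are exactly ±[2α+2,2α+8u]₂ ⊔ ±[4α+6u+4,4α+10u]₄ ⊔ ±[2β+1,2β+4u−1]₂ ⊔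
±[2α+2β+2u+3,2α+2β+10u−1]₄, each appearing exactly once in exactly one array. -/
theorem stmt_8 (α β u : ℕ) (hu : u ≤ α + 1) :
    ∃ A : Fin (2*u) → Matrix (Fin 3) (Fin 3) ℤ,
      (∀ i, (∀ r, ∑ c, A i r c = 0) ∧ (∀ c, ∑ r, A i r c = 0)) ∧
      Function.Injective (fun p : Fin (2*u) × Fin 3 × Fin 3 => A p.1 p.2.1 p.2.2) ∧
      {x : ℤ | ∃ p : Fin (2*u) × Fin 3 × Fin 3, A p.1 p.2.1 p.2.2 = x} =
        pmSet (AP (2*(α:ℤ)+2) 2 (4*u) ∪ AP (4*(α:ℤ)+6*u+4) 4 u ∪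
               AP (2*(β:ℤ)+1) 2 (2*u) ∪ AP (2*(α:ℤ)+2*(β:ℤ)+2*u+3) 4 (2*u)) := by
  refine ⟨fun i r c => (if (i:ℕ) < u then 1 else -1) * sg r c *
      pval α β u (if (i:ℕ) < u then (i:ℕ) else (i:ℕ) - u) r c, ?_, ?_, ?_⟩
  · intro i
    constructor
    · intro r
      by_cases hi : (i:ℕ) < u <;> fin_cases r <;>
        simp [hi, Fin.sum_univ_three, pval, sg] <;> ring
    · intro c
      by_cases hi : (i:ℕ) < u <;> fin_cases c <;>
        simp [hi, Fin.sum_univ_three, pval, sg] <;> ring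
  · rintro ⟨i1, r1, c1⟩ ⟨i2, r2, c2⟩ h
    simp only at h
    have hE1 : ((if (i1:ℕ) < u then (1:ℤ) else -1) * sg r1 c1 = 1 ∨
        (if (i1:ℕ) < u then (1:ℤ) else -1) * sg r1 c1 = -1) := by
      rcases sg_pm r1 c1 with hs | hs <;> by_cases h1 : (i1:ℕ) < u <;> simp [hs, h1]
    have hE2 : ((if (i2:ℕ) < u then (1:ℤ) else -1) * sg r2 c2 = 1 ∨
        (if (i2:ℕ) < u then (1:ℤ) else -1) * sg r2 c2 = -1) := by
      rcases sg_pm r2 c2 with hs | hs <;> by_cases h2 : (i2:ℕ) < u <;> simp [hs, h2]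
    set j1 := if (i1:ℕ) < u then (i1:ℕ) else (i1:ℕ) - u with hj1
    set j2 := if (i2:ℕ) < u then (i2:ℕ) else (i2:ℕ) - u with hj2
    have hj1lt : j1 < u := by
      have := i1.isLt; rw [hj1]; split <;> omega
    have hj2lt : j2 < u := by
      have := i2.isLt; rw [hj2]; split <;> omega
    have hp1 := pval_pos α β u j1 r1 c1
    have hp2 := pval_pos α β u j2 r2 c2
    have hpe : pval α β u j1 r1 c1 = pval α β u j2 r2 c2 := by
      rcases hE1 with hE1 | hE1 <;> rcases hE2 with hE2 | hE2 <;>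
        rw [hE1, hE2] at h <;> simp at h <;> omega
    obtain ⟨hje, hre, hce⟩ := pval_inj α β u hu j1 j2 hj1lt hj2lt r1 c1 r2 c2 hpe
    subst hre; subst hce
    -- now the sign factors agree, so the side agrees
    have hside : (if (i1:ℕ) < u then (1:ℤ) else -1) = (if (i2:ℕ) < u then (1:ℤ) else -1) := by
      rw [hpe] at h
      rcases sg_pm r1 c1 with hs | hs <;> rw [hs] at h <;>
        by_cases h1 : (i1:ℕ) < u <;> by_cases h2 : (i2:ℕ) < u <;>
        simp [h1, h2] at h ⊢ <;> omega
    have : (i1:ℕ) = (i2:ℕ) := by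
      by_cases h1 : (i1:ℕ) < u <;> by_cases h2 : (i2:ℕ) < u <;>
        simp [h1, h2] at hside hj1 hj2 <;> omega
    simp [Prod.ext_iff, Fin.ext_iff, this]
  · ext x
    simp only [Set.mem_setOf_eq, pmSet]
    constructor
    · rintro ⟨⟨i, r, c⟩, rfl⟩
      simp only
      set j := if (i:ℕ) < u then (i:ℕ) else (i:ℕ) - u with hj
      have hjlt : j < u := by
        have := i.isLt; rw [hj]; split <;> omega
      have hmem := pval_mem α β u j hjlt r c
      have hE : ((if (i:ℕ) < u then (1:ℤ) else -1) * sg r c = 1 ∨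
          (if (i:ℕ) < u then (1:ℤ) else -1) * sg r c = -1) := by
        rcases sg_pm r c with hs | hs <;> by_cases h1 : (i:ℕ) < u <;> simp [hs, h1]
      rcases hE with hE | hE <;> rw [hE]
      · left; simpa using hmem
      · right; simpa using hmem
    · intro hx
      have key : ∀ y : ℤ, (y ∈ AP (2*(α:ℤ)+2) 2 (4*u) ∪ AP (4*(α:ℤ)+6*u+4) 4 u ∪
          AP (2*(β:ℤ)+1) 2 (2*u) ∪ AP (2*(α:ℤ)+2*(β:ℤ)+2*u+3) 4 (2*u)) →
          ∀ s : ℤ, s = 1 ∨ s = -1 →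
          ∃ p : Fin (2*u) × Fin 3 × Fin 3,
            (if ((p.1:ℕ)) < u then (1:ℤ) else -1) * sg p.2.1 p.2.2 *
              pval α β u (if ((p.1:ℕ)) < u then ((p.1:ℕ)) else (p.1:ℕ) - u) p.2.1 p.2.2
              = s * y := by
        intro y hy s hs
        obtain ⟨j, hjlt, r, c, rfl⟩ := pval_decode α β u y hy
        rcases sg_pm r c with hsg | hsg <;> rcases hs with rfl | rfl
        · refine ⟨⟨⟨j, by omega⟩, r, c⟩, ?_⟩
          simp [hjlt, hsg]
        · refine ⟨⟨⟨u + j, by omega⟩, r, c⟩, ?_⟩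
          have : ¬ (u + j < u) := by omega
          simp [this, hsg]
        · refine ⟨⟨⟨u + j, by omega⟩, r, c⟩, ?_⟩
          have : ¬ (u + j < u) := by omega
          simp [this, hsg]
        · refine ⟨⟨⟨j, by omega⟩, r, c⟩, ?_⟩
          simp [hjlt, hsg]
      rcases hx with hx | hx
      · obtain ⟨p, hp⟩ := key x hx 1 (Or.inl rfl)
        exact ⟨p, by simpa using hp⟩
      · obtain ⟨p, hp⟩ := key (-x) hx (-1) (Or.inr rfl)
        exact ⟨p, by simpa using hp⟩
end

section
/- For every j ≥ 0, the 6×4 integer array S_j obtained by vertically stacking the three 2×4 blocks Q1([j+1,j+2],[j+3,j+4]), Q1([j+5,j+6],[j+7,j+8]), Q1([j+9,j+10],[j+11,j+12]) is a zero-sum block whose entries are exactly ±(j+1), ±(j+2), ..., ±(j+12), each appearing exactly once. -/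
private def sgn17 : Fin 6 × Fin 4 → Bool := fun p =>
  ![![true, false, false, true], ![false, true, true, false],
    ![true, false, false, true], ![false, true, true, false],
    ![true, false, false, true], ![false, true, true, false]] p.1 p.2

private def k17 : Fin 6 × Fin 4 → ℕ := fun p =>
  ![![1,2,3,4], ![1,2,3,4], ![5,6,7,8], ![5,6,7,8], ![9,10,11,12], ![9,10,11,12]] p.1 p.2

private def f17 (j : ℤ) (p : Fin 6 × Fin 4) : ℤ :=
  if sgn17 p then j + k17 p else -(j + (k17 p : ℤ))

private lemma k17_bounds (p : Fin 6 × Fin 4) : 1 ≤ k17 p ∧ k17 p ≤ 12 := by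
  revert p; decide

private lemma ks_inj : Function.Injective (fun p : Fin 6 × Fin 4 => (k17 p, sgn17 p)) := by
  decide

private lemma f17_inj (j : ℤ) (hj : 0 ≤ j) : Function.Injective (f17 j) := by
  intro p q h
  have hp := k17_bounds p
  have hq := k17_bounds q
  apply ks_inj
  unfold f17 at h
  by_cases h1 : sgn17 p <;> by_cases h2 : sgn17 q <;> simp [h1, h2] at h ⊢ <;> omega

private lemma exists17 (i : ℕ) (hi : i < 12) (b : Bool) :
    ∃ p : Fin 6 × Fin 4, k17 p = i + 1 ∧ sgn17 p = b := by
  revert b; interval_cases i <;> intro b <;> cases b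
  · exact ⟨(1,0), by decide⟩
  · exact ⟨(0,0), by decide⟩
  · exact ⟨(0,1), by decide⟩
  · exact ⟨(1,1), by decide⟩
  · exact ⟨(0,2), by decide⟩
  · exact ⟨(1,2), by decide⟩
  · exact ⟨(1,3), by decide⟩
  · exact ⟨(0,3), by decide⟩
  · exact ⟨(3,0), by decide⟩
  · exact ⟨(2,0), by decide⟩
  · exact ⟨(2,1), by decide⟩
  · exact ⟨(3,1), by decide⟩
  · exact ⟨(2,2), by decide⟩
  · exact ⟨(3,2), by decide⟩
  · exact ⟨(3,3), by decide⟩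
  · exact ⟨(2,3), by decide⟩
  · exact ⟨(5,0), by decide⟩
  · exact ⟨(4,0), by decide⟩
  · exact ⟨(4,1), by decide⟩
  · exact ⟨(5,1), by decide⟩
  · exact ⟨(4,2), by decide⟩
  · exact ⟨(5,2), by decide⟩
  · exact ⟨(5,3), by decide⟩
  · exact ⟨(4,3), by decide⟩

/-- for every j ≥ 0, the 6×4 array S_j obtained by stacking the three
blocks Q1([j+1,j+2],[j+3,j+4]), Q1([j+5,j+6],[j+7,j+8]), Q1([j+9,j+10],[j+11,j+12])
is a zero-sum block whose entries are exactly ±(j+1), …, ±(j+12), each appearing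
exactly once. -/
theorem stmt_17 (j : ℤ) (hj : 0 ≤ j) :
    let S : Matrix (Fin 6) (Fin 4) ℤ :=
      !![j+1, -(j+2), -(j+3), j+4;
         -(j+1), j+2, j+3, -(j+4);
         j+5, -(j+6), -(j+7), j+8;
         -(j+5), j+6, j+7, -(j+8);
         j+9, -(j+10), -(j+11), j+12;
         -(j+9), j+10, j+11, -(j+12)]
    (∀ i, ∑ c, S i c = 0) ∧ (∀ c, ∑ i, S i c = 0) ∧
    Function.Injective (fun p : Fin 6 × Fin 4 => S p.1 p.2) ∧
    {x : ℤ | ∃ p : Fin 6 × Fin 4, S p.1 p.2 = x} =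
      {x : ℤ | ∃ i : ℕ, i < 12 ∧ (x = j + 1 + i ∨ x = -(j + 1 + i))} := by
  intro S
  have hS : ∀ p : Fin 6 × Fin 4, S p.1 p.2 = f17 j p := by
    rintro ⟨p1, p2⟩
    fin_cases p1 <;> fin_cases p2 <;> rfl
  refine ⟨?_, ?_, ?_, ?_⟩
  · intro i
    have : ∑ c, S i c = ∑ c, f17 j (i, c) := by
      exact Finset.sum_congr rfl fun c _ => hS (i, c)
    clear this
    fin_cases i <;> rw [Fin.sum_univ_four]
    · show (j+1) + -(j+2) + -(j+3) + (j+4) = 0; ring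
    · show -(j+1) + (j+2) + (j+3) + -(j+4) = 0; ring
    · show (j+5) + -(j+6) + -(j+7) + (j+8) = 0; ring
    · show -(j+5) + (j+6) + (j+7) + -(j+8) = 0; ring
    · show (j+9) + -(j+10) + -(j+11) + (j+12) = 0; ring
    · show -(j+9) + (j+10) + (j+11) + -(j+12) = 0; ring
  · intro c
    fin_cases c <;> rw [Fin.sum_univ_six]
    · show (j+1) + -(j+1) + (j+5) + -(j+5) + (j+9) + -(j+9) = 0; ring
    · show -(j+2) + (j+2) + -(j+6) + (j+6) + -(j+10) + (j+10) = 0; ring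
    · show -(j+3) + (j+3) + -(j+7) + (j+7) + -(j+11) + (j+11) = 0; ring
    · show (j+4) + -(j+4) + (j+8) + -(j+8) + (j+12) + -(j+12) = 0; ring
  · intro p q h
    apply f17_inj j hj
    rw [← hS p, ← hS q]; exact h
  · ext x
    simp only [Set.mem_setOf_eq]
    constructor
    · rintro ⟨p, rfl⟩
      rw [hS p]
      obtain ⟨h1, h2⟩ := k17_bounds p
      refine ⟨k17 p - 1, by omega, ?_⟩
      unfold f17
      split_ifs
      · left; push_cast; omega
      · right; push_cast; omega
    · rintro ⟨i, hi, h | h⟩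
      · obtain ⟨p, hk, hs⟩ := exists17 i hi true
        exact ⟨p, by rw [hS p]; simp [f17, hs, hk]; push_cast; omega⟩
      · obtain ⟨p, hk, hs⟩ := exists17 i hi false
        exact ⟨p, by rw [hS p]; simp [f17, hs, hk]; push_cast; omega⟩
end

section
/- If there exists a signed magic array set SMAS(6,b;c) for some b,c ≥ 1, then there exists a signed magic array set SMAS(6,b+4;c). -/
/-!
Since `6bc` is even, `Ω = {±1, …, ±3bc}`, and passing to `b + 4` adds the `12c` values of absolute
value in `(3bc, 3bc + 12c]`. Array `i` gets four new columns: a fixed `6 × 4` block with entries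
`±1, …, ±12`, each entry `z` replaced by `z + sign z · (3bc + 12i)`, so that array `i` takes exactly
the values of absolute value in `(3bc + 12i, 3bc + 12i + 12]`. Every row and column of the block
has zero sum and as many positive as negative entries, hence still has zero sum after the shift.
-/

/-- The set Ω of a signed magic array (set) with N = total number of entries:
Ω = {0, ±1, …, ±(N−1)/2} if N is odd and Ω = {±1, …, ±N/2} if N is even. -/
def SMASet (N : ℕ) : Set ℤ :=
  if N % 2 = 1 then {x : ℤ | 2 * x.natAbs ≤ N - 1}
  else {x : ℤ | x ≠ 0 ∧ 2 * x.natAbs ≤ N}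

/-- A signed magic array set SMAS(a,b;e): e fully-filled a×b integer arrays such that
every element of Ω appears exactly once in exactly one array, and all row and column
sums of each array are 0. -/
def IsSMAS (a b e : ℕ) (A : Fin e → Matrix (Fin a) (Fin b) ℤ) : Prop :=
  (∀ x ∈ SMASet (a * b * e), ∃! p : Fin e × Fin a × Fin b, A p.1 p.2.1 p.2.2 = x) ∧
  (∀ i r c, A i r c ∈ SMASet (a * b * e)) ∧
  (∀ i r, ∑ c, A i r c = 0) ∧
  (∀ i c, ∑ r, A i r c = 0)

open Function Set

section Entries

variable {α : Type*} {e a m n : ℕ}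

def entries (A : Fin e → Matrix (Fin a) (Fin m) α) : Fin e × Fin a × Fin m → α :=
  fun p => A p.1 p.2.1 p.2.2

theorem existsUnique_and_mem_iff {ι β : Type*} {f : ι → β} {s : Set β} :
    ((∀ x ∈ s, ∃! p, f p = x) ∧ ∀ p, f p ∈ s) ↔ Injective f ∧ range f = s := by
  constructor
  · rintro ⟨hunique, hmem⟩
    refine ⟨fun p q hpq => (hunique _ (hmem p)).unique rfl hpq.symm, ?_⟩
    ext x
    exact ⟨by rintro ⟨p, rfl⟩; exact hmem p, fun hx => (hunique x hx).exists⟩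
  · rintro ⟨hinj, rfl⟩
    exact ⟨fun x ⟨p, hp⟩ => ⟨p, hp, fun q hq => hinj (hq.trans hp.symm)⟩, fun p => ⟨p, rfl⟩⟩

theorem isSMAS_iff (A : Fin e → Matrix (Fin a) (Fin m) ℤ) :
    IsSMAS a m e A ↔ Injective (entries A) ∧ range (entries A) = SMASet (a * m * e) ∧
      (∀ i r, ∑ j, A i r j = 0) ∧ (∀ i j, ∑ r, A i r j = 0) := by
  have hmem : (∀ i r j, A i r j ∈ SMASet (a * m * e)) ↔ ∀ p, entries A p ∈ SMASet (a * m * e) :=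
    by simp only [entries, Prod.forall]
  exact and_assoc.symm.trans
    ((and_congr_left' ((and_congr_right' hmem).trans existsUnique_and_mem_iff)).trans and_assoc)

def appendCols (A : Fin e → Matrix (Fin a) (Fin m) α) (C : Fin e → Matrix (Fin a) (Fin n) α) :
    Fin e → Matrix (Fin a) (Fin (m + n)) α :=
  fun i r => Fin.append (A i r) (C i r)

variable (A : Fin e → Matrix (Fin a) (Fin m) α) (C : Fin e → Matrix (Fin a) (Fin n) α)

@[simp]
theorem appendCols_castAdd (i : Fin e) (r : Fin a) (j : Fin m) :
    appendCols A C i r (Fin.castAdd n j) = A i r j :=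
  Fin.append_left _ _ j

@[simp]
theorem appendCols_natAdd (i : Fin e) (r : Fin a) (j : Fin n) :
    appendCols A C i r (Fin.natAdd m j) = C i r j :=
  Fin.append_right _ _ j

def appendColsIndex : (Fin e × Fin a × Fin m) ⊕ (Fin e × Fin a × Fin n) →
    Fin e × Fin a × Fin (m + n) :=
  Sum.elim (fun p => (p.1, p.2.1, Fin.castAdd n p.2.2)) (fun p => (p.1, p.2.1, Fin.natAdd m p.2.2))

theorem surjective_appendColsIndex :
    Surjective (appendColsIndex (e := e) (a := a) (m := m) (n := n)) := by
  rintro ⟨i, r, j⟩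
  induction j using Fin.addCases with
  | left j => exact ⟨.inl (i, r, j), rfl⟩
  | right j => exact ⟨.inr (i, r, j), rfl⟩

theorem entries_appendCols_comp :
    entries (appendCols A C) ∘ appendColsIndex = Sum.elim (entries A) (entries C) := by
  ext (p | p) <;> simp [entries, appendColsIndex]

theorem injective_entries_appendCols (hA : Injective (entries A)) (hC : Injective (entries C))
    (hAC : Disjoint (range (entries A)) (range (entries C))) :
    Injective (entries (appendCols A C)) := by
  refine Injective.of_comp_right ?_ surjective_appendColsIndex
  rw [entries_appendCols_comp]
  exact hA.sumElim hC (disjoint_range_iff.1 hAC)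

theorem range_entries_appendCols :
    range (entries (appendCols A C)) = range (entries A) ∪ range (entries C) := by
  rw [← surjective_appendColsIndex.range_comp, entries_appendCols_comp, Sum.elim_range]

end Entries

theorem IsSMAS.appendCols {e a m n : ℕ} {A : Fin e → Matrix (Fin a) (Fin m) ℤ}
    {C : Fin e → Matrix (Fin a) (Fin n) ℤ} (hA : IsSMAS a m e A) (hC : Injective (entries C))
    (hdisj : Disjoint (SMASet (a * m * e)) (range (entries C)))
    (hunion : SMASet (a * m * e) ∪ range (entries C) = SMASet (a * (m + n) * e))
    (hrow : ∀ i r, ∑ j, C i r j = 0) (hcol : ∀ i j, ∑ r, C i r j = 0) :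
    IsSMAS a (m + n) e (appendCols A C) := by
  obtain ⟨hAinj, hArange, hArow, hAcol⟩ := (isSMAS_iff A).1 hA
  refine (isSMAS_iff _).2 ⟨?_, ?_, fun i r => ?_, fun i j => ?_⟩
  · exact injective_entries_appendCols A C hAinj hC (hArange ▸ hdisj)
  · rw [range_entries_appendCols, hArange, hunion]
  · simp [Fin.sum_univ_add, hArow, hrow]
  · induction j using Fin.addCases <;> simp [hAcol, hcol]

theorem SMASet_two_mul (n : ℕ) : SMASet (2 * n) = {x | x ≠ 0 ∧ x.natAbs ≤ n} := by
  ext x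
  rw [SMASet, if_neg (by omega)]
  simp only [mem_ofPred_eq]
  omega

section SignShift

def signShift (m : ℕ) (z : ℤ) : ℤ := z + z.sign * m

theorem sign_signShift (m : ℕ) (z : ℤ) : (signShift m z).sign = z.sign := by
  rcases lt_trichotomy z 0 with hz | rfl | hz
  · rw [signShift, Int.sign_eq_neg_one_of_neg hz, Int.sign_eq_neg_one_of_neg (by omega)]
  · simp [signShift]
  · rw [signShift, Int.sign_eq_one_of_pos hz, Int.sign_eq_one_of_pos (by omega)]

theorem natAbs_signShift (m : ℕ) {z : ℤ} (hz : z ≠ 0) :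
    (signShift m z).natAbs = z.natAbs + m := by
  rcases hz.lt_or_gt with hz | hz
  · rw [signShift, Int.sign_eq_neg_one_of_neg hz]; omega
  · rw [signShift, Int.sign_eq_one_of_pos hz]; omega

theorem signShift_injective (m : ℕ) : Injective (signShift m) := by
  intro z w h
  have hsign : z.sign = w.sign := by rw [← sign_signShift m z, h, sign_signShift]
  simpa [signShift, hsign] using h

theorem Int.eq_of_sign_eq_of_natAbs_eq {x y : ℤ} (hs : x.sign = y.sign)
    (ha : x.natAbs = y.natAbs) : x = y := by
  rw [← Int.sign_mul_natAbs x, ← Int.sign_mul_natAbs y, hs, ha]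

theorem exists_signShift_eq {m : ℕ} {x : ℤ} (hx : m < x.natAbs) :
    ∃ z, z ≠ 0 ∧ z.natAbs = x.natAbs - m ∧ signShift m z = x := by
  have hx0 : x ≠ 0 := by omega
  have hk : (0 : ℤ) < (x.natAbs - m : ℕ) := by omega
  have hz : (x.sign * (x.natAbs - m : ℕ)).natAbs = x.natAbs - m := by
    rw [Int.natAbs_mul, Int.natAbs_sign_of_ne_zero hx0, one_mul, Int.natAbs_natCast]
  have hz0 : x.sign * (x.natAbs - m : ℕ) ≠ 0 := by omega
  refine ⟨_, hz0, hz, Int.eq_of_sign_eq_of_natAbs_eq ?_ ?_⟩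
  · rw [sign_signShift, Int.sign_mul, Int.sign_sign, Int.sign_eq_one_of_pos hk, mul_one]
  · rw [natAbs_signShift m hz0, hz]
    omega

theorem sum_signShift {ι : Type*} (m : ℕ) (s : Finset ι) (f : ι → ℤ) :
    ∑ i ∈ s, signShift m (f i) = ∑ i ∈ s, f i + (∑ i ∈ s, (f i).sign) * m := by
  simp only [signShift, Finset.sum_add_distrib, Finset.sum_mul]

end SignShift

section Block

def zeroSumBlock : Matrix (Fin 6) (Fin 4) ℤ :=
  !![1, -1, 6, -6; 3, -3, 10, -10; 7, -7, 12, -12; -2, 2, -8, 8; -4, 4, -9, 9; -5, 5, -11, 11]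

theorem zeroSumBlock_row_sum (r : Fin 6) : ∑ j, zeroSumBlock r j = 0 := by revert r; decide

theorem zeroSumBlock_col_sum (j : Fin 4) : ∑ r, zeroSumBlock r j = 0 := by revert j; decide

theorem zeroSumBlock_row_sign_sum (r : Fin 6) : ∑ j, (zeroSumBlock r j).sign = 0 := by
  revert r; decide

theorem zeroSumBlock_col_sign_sum (j : Fin 4) : ∑ r, (zeroSumBlock r j).sign = 0 := by
  revert j; decide

theorem injective_zeroSumBlock : Injective fun q : Fin 6 × Fin 4 => zeroSumBlock q.1 q.2 := by
  decide

theorem zeroSumBlock_ne_zero_and_natAbs_le (r : Fin 6) (j : Fin 4) :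
    zeroSumBlock r j ≠ 0 ∧ (zeroSumBlock r j).natAbs ≤ 12 := by
  have : ∀ q : Fin 6 × Fin 4, zeroSumBlock q.1 q.2 ≠ 0 ∧ (zeroSumBlock q.1 q.2).natAbs ≤ 12 := by
    decide
  exact this (r, j)

theorem range_zeroSumBlock :
    range (fun q : Fin 6 × Fin 4 => zeroSumBlock q.1 q.2) = {z | z ≠ 0 ∧ z.natAbs ≤ 12} := by
  ext z
  constructor
  · rintro ⟨⟨r, j⟩, rfl⟩
    exact zeroSumBlock_ne_zero_and_natAbs_le r j
  · rintro ⟨hz0, hz⟩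
    have : -12 ≤ z := by omega
    have : z ≤ 12 := by omega
    interval_cases z <;> first | exact absurd rfl hz0 | decide

end Block

section ShiftedBlocks

def shiftedBlocks (M c : ℕ) : Fin c → Matrix (Fin 6) (Fin 4) ℤ :=
  fun i r j => signShift (M + 12 * i) (zeroSumBlock r j)

variable (M c : ℕ)

theorem shiftedBlocks_row_sum (i : Fin c) (r : Fin 6) : ∑ j, shiftedBlocks M c i r j = 0 := by
  simp [shiftedBlocks, sum_signShift, zeroSumBlock_row_sum, zeroSumBlock_row_sign_sum]

theorem shiftedBlocks_col_sum (i : Fin c) (j : Fin 4) : ∑ r, shiftedBlocks M c i r j = 0 := by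
  simp [shiftedBlocks, sum_signShift, zeroSumBlock_col_sum, zeroSumBlock_col_sign_sum]

theorem natAbs_shiftedBlocks (i : Fin c) (r : Fin 6) (j : Fin 4) :
    (shiftedBlocks M c i r j).natAbs = (zeroSumBlock r j).natAbs + (M + 12 * i) :=
  natAbs_signShift _ (zeroSumBlock_ne_zero_and_natAbs_le r j).1

theorem injective_entries_shiftedBlocks : Injective (entries (shiftedBlocks M c)) := by
  rintro ⟨i, r, j⟩ ⟨i', r', j'⟩ h
  have hi : i = i' := by
    have habs := congrArg Int.natAbs h
    simp only [entries, natAbs_shiftedBlocks] at habs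
    have := zeroSumBlock_ne_zero_and_natAbs_le r j
    have := zeroSumBlock_ne_zero_and_natAbs_le r' j'
    ext
    omega
  subst hi
  obtain ⟨rfl, rfl⟩ := Prod.mk.inj (injective_zeroSumBlock (signShift_injective _ h))
  rfl

theorem range_entries_shiftedBlocks :
    range (entries (shiftedBlocks M c)) = {x | M < x.natAbs ∧ x.natAbs ≤ M + 12 * c} := by
  ext x
  constructor
  · rintro ⟨⟨i, r, j⟩, rfl⟩
    have := natAbs_shiftedBlocks M c i r j
    have := zeroSumBlock_ne_zero_and_natAbs_le r j
    have := i.isLt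
    simp only [entries, mem_ofPred_eq]
    omega
  · rintro ⟨hlo, hhi⟩
    -- `x` lies in the range `(M + 12i, M + 12i + 12]` of the `i`-th shifted block
    generalize hi_def : (x.natAbs - M - 1) / 12 = i
    have hi : i < c := by omega
    obtain ⟨z, hz0, hz, rfl⟩ := exists_signShift_eq (m := M + 12 * i) (x := x) (by omega)
    obtain ⟨⟨r, j⟩, hrj⟩ : z ∈ range fun q : Fin 6 × Fin 4 => zeroSumBlock q.1 q.2 := by
      rw [range_zeroSumBlock]
      exact ⟨hz0, by omega⟩
    exact ⟨(⟨i, hi⟩, r, j), by simp only [entries, shiftedBlocks, ← hrj]⟩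

end ShiftedBlocks

theorem stmt_18_general (b c : ℕ)
    (h : ∃ A : Fin c → Matrix (Fin 6) (Fin b) ℤ, IsSMAS 6 b c A) :
    ∃ B : Fin c → Matrix (Fin 6) (Fin (b + 4)) ℤ, IsSMAS 6 (b + 4) c B := by
  obtain ⟨A, hA⟩ := h
  have hold : SMASet (6 * b * c) = {x | x ≠ 0 ∧ x.natAbs ≤ 3 * b * c} := by
    rw [show 6 * b * c = 2 * (3 * b * c) by ring, SMASet_two_mul]
  have hnew : SMASet (6 * (b + 4) * c) = {x | x ≠ 0 ∧ x.natAbs ≤ 3 * b * c + 12 * c} := by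
    rw [show 6 * (b + 4) * c = 2 * (3 * b * c + 12 * c) by ring, SMASet_two_mul]
  refine ⟨appendCols A (shiftedBlocks (3 * b * c) c),
    hA.appendCols (injective_entries_shiftedBlocks _ _) ?_ ?_
      (shiftedBlocks_row_sum _ _) (shiftedBlocks_col_sum _ _)⟩
  all_goals rw [range_entries_shiftedBlocks, hold]
  · exact disjoint_left.2 fun x hx hx' => by
      simp only [mem_ofPred_eq] at hx hx'
      omega
  · rw [hnew]
    ext x
    simp only [mem_union, mem_ofPred_eq]
    omega

/-- if an SMAS(6,b;c) exists, then an SMAS(6,b+4;c) exists. -/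
theorem stmt_18 (b c : ℕ) (hb : 1 ≤ b) (hc : 1 ≤ c)
    (h : ∃ A : Fin c → Matrix (Fin 6) (Fin b) ℤ, IsSMAS 6 b c A) :
    ∃ B : Fin c → Matrix (Fin 6) (Fin (b + 4)) ℤ, IsSMAS 6 (b + 4) c B :=
  stmt_18_general b c h
end

section
/- If for positive integers k, s, c there exists a signed magic array set SMAS(k,s;2c), then there exists a signed magic array SMA(2ck, 2cs; s, k), obtained as the block-diagonal array diag(R₁,...,R₂c) of the 2c arrays of the set (with all other cells empty). -/
private lemma idx_lt (e r a b : ℕ) (he : e < a) (hr : r < b) : e * b + r < a * b :=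
  calc e * b + r < (e + 1) * b := by rw [add_mul, one_mul]; omega
  _ ≤ a * b := Nat.mul_le_mul_right _ he

private lemma mydiv (e t b : ℕ) (hb : 0 < b) (ht : t < b) : (e * b + t) / b = e := by
  rw [mul_comm, Nat.mul_add_div hb, Nat.div_eq_of_lt ht, add_zero]

private lemma mymod (e t b : ℕ) (ht : t < b) : (e * b + t) % b = t := by
  rw [mul_comm, Nat.mul_add_mod, Nat.mod_eq_of_lt ht]

private def mulEquiv (a b : ℕ) (hb : 0 < b) : Fin a × Fin b ≃ Fin (a * b) where
  toFun p := ⟨p.1 * b + p.2, idx_lt _ _ _ _ p.1.isLt p.2.isLt⟩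
  invFun j := (⟨j.1 / b, Nat.div_lt_of_lt_mul (mul_comm a b ▸ j.isLt)⟩,
               ⟨j.1 % b, Nat.mod_lt _ hb⟩)
  left_inv p := by
    ext
    · simp [mydiv p.1.1 p.2.1 b hb p.2.isLt]
    · simp [mymod p.1.1 p.2.1 b p.2.isLt]
  right_inv j := by
    ext
    simp [Nat.div_add_mod']

private lemma card_div_eq (a b e : ℕ) (hb : 0 < b) (he : e < a) :
    (Finset.univ.filter fun j : Fin (a * b) => (j : ℕ) / b = e).card = b := by
  have : (Finset.univ.filter fun j : Fin (a * b) => (j : ℕ) / b = e).card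
      = (Finset.univ : Finset (Fin b)).card := by
    refine Finset.card_bij' (fun j _ => ⟨(j : ℕ) % b, Nat.mod_lt _ hb⟩)
      (fun t _ => ⟨e * b + t.1, idx_lt _ _ _ _ he t.isLt⟩) (fun _ _ => Finset.mem_univ _)
      (fun t _ => ?_) (fun j hj => ?_) (fun t _ => ?_)
    · simp [mydiv e t.1 b hb t.isLt]
    · simp only [Finset.mem_filter] at hj
      ext
      simp only
      rw [← hj.2, Nat.div_add_mod']
    · ext
      simp [mymod e t.1 b t.isLt]
  rw [this, Finset.card_univ, Fintype.card_fin]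

/-- A signed magic array SMA(m,n;s,k): an m×n partially filled array with entries in
Ω (depending on nk), each element of Ω appearing exactly once, s filled cells per row,
k filled cells per column, and all row and column sums 0. -/
def IsSMA (m n s k : ℕ) (A : Matrix (Fin m) (Fin n) (Option ℤ)) : Prop :=
  (∀ x ∈ SMASet (n * k), ∃! p : Fin m × Fin n, A p.1 p.2 = some x) ∧
  (∀ i j x, A i j = some x → x ∈ SMASet (n * k)) ∧
  (∀ i, (Finset.univ.filter fun j => (A i j).isSome).card = s) ∧
  (∀ j, (Finset.univ.filter fun i => (A i j).isSome).card = k) ∧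
  (∀ i, ∑ j, (A i j).getD 0 = 0) ∧
  (∀ j, ∑ i, (A i j).getD 0 = 0)

/-- if an SMAS(k,s;2c) {R₁,…,R₂c} exists, then the block-diagonal
partially filled array diag(R₁,…,R₂c) is an SMA(2ck, 2cs; s, k). -/
theorem stmt_19 (k s c : ℕ) (hk : 0 < k) (hs : 0 < s) (hc : 0 < c)
    (R : Fin (2 * c) → Matrix (Fin k) (Fin s) ℤ) (hR : IsSMAS k s (2 * c) R) :
    IsSMA (2 * c * k) (2 * c * s) s k
      (Matrix.of fun i j =>
        if (i : ℕ) / k = (j : ℕ) / s then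
          some (R ⟨(i : ℕ) / k, Nat.div_lt_of_lt_mul (by have := i.isLt; ring_nf at this ⊢; omega)⟩
                  ⟨(i : ℕ) % k, Nat.mod_lt _ hk⟩
                  ⟨(j : ℕ) % s, Nat.mod_lt _ hs⟩)
        else none) := by
  obtain ⟨hmem, hOm, hrow, hcol⟩ := hR
  have hN : k * s * (2 * c) = 2 * c * s * k := by ring
  set A : Matrix (Fin (2 * c * k)) (Fin (2 * c * s)) (Option ℤ) :=
      (Matrix.of fun i j =>
        if (i : ℕ) / k = (j : ℕ) / s then
          some (R ⟨(i : ℕ) / k, Nat.div_lt_of_lt_mul (by have := i.isLt; ring_nf at this ⊢; omega)⟩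
                  ⟨(i : ℕ) % k, Nat.mod_lt _ hk⟩
                  ⟨(j : ℕ) % s, Nat.mod_lt _ hs⟩)
        else none) with hA
  have hAapp : ∀ (i : Fin (2 * c * k)) (j : Fin (2 * c * s)),
      A i j = if h : (i : ℕ) / k = (j : ℕ) / s then
          some (R ⟨(i : ℕ) / k, Nat.div_lt_of_lt_mul (by have := i.isLt; ring_nf at this ⊢; omega)⟩
                  ⟨(i : ℕ) % k, Nat.mod_lt _ hk⟩
                  ⟨(j : ℕ) % s, Nat.mod_lt _ hs⟩)
        else none := by
    intro i j
    rw [hA]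
    simp only [Matrix.of_apply]
    split <;> simp_all
  have hdivk : ∀ i : Fin (2 * c * k), (i : ℕ) / k < 2 * c :=
    fun i => Nat.div_lt_of_lt_mul (by have := i.isLt; ring_nf at this ⊢; omega)
  have hdivs : ∀ j : Fin (2 * c * s), (j : ℕ) / s < 2 * c :=
    fun j => Nat.div_lt_of_lt_mul (by have := j.isLt; ring_nf at this ⊢; omega)
  refine ⟨?_, ?_, ?_, ?_, ?_, ?_⟩
  · -- uniqueness of each element of Ω
    intro x hx
    have hx' : x ∈ SMASet (k * s * (2 * c)) := by rwa [hN]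
    obtain ⟨⟨e, r, t⟩, hp, hu⟩ := hmem x hx'
    refine ⟨(⟨e.1 * k + r.1, idx_lt _ _ _ _ e.isLt r.isLt⟩,
             ⟨e.1 * s + t.1, idx_lt _ _ _ _ e.isLt t.isLt⟩), ?_, ?_⟩
    · show A _ _ = some x
      rw [hAapp]
      have h1 : (e.1 * k + r.1) / k = e.1 := mydiv _ _ _ hk r.isLt
      have h2 : (e.1 * k + r.1) % k = r.1 := mymod _ _ _ r.isLt
      have h3 : (e.1 * s + t.1) / s = e.1 := mydiv _ _ _ hs t.isLt
      have h4 : (e.1 * s + t.1) % s = t.1 := mymod _ _ _ t.isLt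
      simp only [h1, h2, h3, h4, dif_pos]
      simp only [Fin.eta]
      exact congrArg some hp
    · rintro ⟨i, j⟩ hq
      rw [hAapp] at hq
      split at hq
      case isFalse => exact absurd hq (by simp)
      case isTrue h =>
        have hx2 : R ⟨(i : ℕ) / k, hdivk i⟩ ⟨(i : ℕ) % k, Nat.mod_lt _ hk⟩
            ⟨(j : ℕ) % s, Nat.mod_lt _ hs⟩ = x := Option.some_inj.mp hq
        have := hu (⟨(i : ℕ) / k, hdivk i⟩, ⟨(i : ℕ) % k, Nat.mod_lt _ hk⟩,
            ⟨(j : ℕ) % s, Nat.mod_lt _ hs⟩) hx2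
        simp only [Prod.mk.injEq] at this
        obtain ⟨he, hr, ht⟩ := this
        have he' : (i : ℕ) / k = e.1 := congrArg Fin.val he
        have hr' : (i : ℕ) % k = r.1 := congrArg Fin.val hr
        have ht' : (j : ℕ) % s = t.1 := congrArg Fin.val ht
        have hje : (j : ℕ) / s = e.1 := by rw [← h]; exact he'
        refine Prod.ext (Fin.ext ?_) (Fin.ext ?_)
        · show (i : ℕ) = e.1 * k + r.1
          rw [← he', ← hr', Nat.div_add_mod']
        · show (j : ℕ) = e.1 * s + t.1
          rw [← hje, ← ht', Nat.div_add_mod']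
  · -- entries lie in Ω
    intro i j x hx
    rw [hAapp] at hx
    split at hx
    case isFalse => exact absurd hx (by simp)
    case isTrue h =>
      rw [show (2 * c * s * k) = k * s * (2 * c) from by ring]
      rw [← Option.some_inj.mp hx]
      exact hOm _ _ _
  · -- rows have s filled cells
    intro i
    have : (Finset.univ.filter fun j => (A i j).isSome)
        = Finset.univ.filter fun j : Fin (2 * c * s) => (j : ℕ) / s = (i : ℕ) / k := by
      ext j
      simp only [Finset.mem_filter, Finset.mem_univ, true_and, hAapp]
      split
      case isTrue h => simp [h.symm]
      case isFalse h => exact iff_of_false (by simp) (fun hh => h hh.symm)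
    rw [this, card_div_eq (2 * c) s _ hs (hdivk i)]
  · -- columns have k filled cells
    intro j
    have : (Finset.univ.filter fun i => (A i j).isSome)
        = Finset.univ.filter fun i : Fin (2 * c * k) => (i : ℕ) / k = (j : ℕ) / s := by
      ext i
      simp only [Finset.mem_filter, Finset.mem_univ, true_and, hAapp]
      split
      case isTrue h => simp [h]
      case isFalse h => simp [h]
    rw [this, card_div_eq (2 * c) k _ hk (hdivs j)]
  · -- row sums
    intro i
    rw [← Equiv.sum_comp (mulEquiv (2 * c) s hs) (fun j => (A i j).getD 0),
      Fintype.sum_prod_type]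
    have key : ∀ (f : Fin (2 * c)) (t : Fin s),
        (A i (mulEquiv (2 * c) s hs (f, t))).getD 0
          = if (⟨(i : ℕ) / k, hdivk i⟩ : Fin (2 * c)) = f
            then R ⟨(i : ℕ) / k, hdivk i⟩ ⟨(i : ℕ) % k, Nat.mod_lt _ hk⟩ t else 0 := by
      intro f t
      rw [hAapp]
      have h3 : (f.1 * s + t.1) / s = f.1 := mydiv _ _ _ hs t.isLt
      have h4 : (f.1 * s + t.1) % s = t.1 := mymod _ _ _ t.isLt
      have hval : ((mulEquiv (2 * c) s hs (f, t)) : ℕ) = f.1 * s + t.1 := rfl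
      simp only [hval, h3, h4, Fin.eta]
      by_cases h : (i : ℕ) / k = f.1
      · rw [dif_pos h, if_pos (Fin.ext h)]
        simp
      · rw [dif_neg h, if_neg (fun hh => h (congrArg Fin.val hh))]
        simp
    simp only [key]
    have pull : ∀ f : Fin (2 * c),
        (∑ t : Fin s, if (⟨(i : ℕ) / k, hdivk i⟩ : Fin (2 * c)) = f
            then R ⟨(i : ℕ) / k, hdivk i⟩ ⟨(i : ℕ) % k, Nat.mod_lt _ hk⟩ t else 0)
        = if (⟨(i : ℕ) / k, hdivk i⟩ : Fin (2 * c)) = f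
            then ∑ t : Fin s, R ⟨(i : ℕ) / k, hdivk i⟩ ⟨(i : ℕ) % k, Nat.mod_lt _ hk⟩ t
            else 0 := by
      intro f
      split <;> simp
    simp only [pull]
    rw [Finset.sum_ite_eq]
    simp [hrow]
  · -- column sums
    intro j
    rw [← Equiv.sum_comp (mulEquiv (2 * c) k hk) (fun i => (A i j).getD 0),
      Fintype.sum_prod_type]
    have key : ∀ (f : Fin (2 * c)) (r : Fin k),
        (A (mulEquiv (2 * c) k hk (f, r)) j).getD 0
          = if (⟨(j : ℕ) / s, hdivs j⟩ : Fin (2 * c)) = f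
            then R ⟨(j : ℕ) / s, hdivs j⟩ r ⟨(j : ℕ) % s, Nat.mod_lt _ hs⟩ else 0 := by
      intro f r
      rw [hAapp]
      have h3 : (f.1 * k + r.1) / k = f.1 := mydiv _ _ _ hk r.isLt
      have h4 : (f.1 * k + r.1) % k = r.1 := mymod _ _ _ r.isLt
      have hval : ((mulEquiv (2 * c) k hk (f, r)) : ℕ) = f.1 * k + r.1 := rfl
      simp only [hval, h3, h4, Fin.eta]
      by_cases h : f.1 = (j : ℕ) / s
      · rw [dif_pos h, if_pos (Fin.ext h.symm)]
        simp [← h]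
      · rw [dif_neg h, if_neg (fun hh => h (congrArg Fin.val hh).symm)]
        simp
    simp only [key]
    have pull : ∀ f : Fin (2 * c),
        (∑ r : Fin k, if (⟨(j : ℕ) / s, hdivs j⟩ : Fin (2 * c)) = f
            then R ⟨(j : ℕ) / s, hdivs j⟩ r ⟨(j : ℕ) % s, Nat.mod_lt _ hs⟩ else 0)
        = if (⟨(j : ℕ) / s, hdivs j⟩ : Fin (2 * c)) = f
            then ∑ r : Fin k, R ⟨(j : ℕ) / s, hdivs j⟩ r ⟨(j : ℕ) % s, Nat.mod_lt _ hs⟩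
            else 0 := by
      intro f
      split <;> simp
    simp only [pull]
    rw [Finset.sum_ite_eq]
    simp [hcol]
end
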